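/- Let g : ℝ → ℝ be a nondecreasing function and c > 0. If t · Π({x ∈ ℝ : |g(x) − c x| > t}) → 0 as t → ∞, where Π is the Poisson measure dΠ(x) = dx/(1+x²), then g(x)/x → c as x → +∞ and as x → −∞. -/

import Mathlib

open MeasureTheory Filter Set
open scoped ENNReal NNReal Topology ZeroAtInfty ComplexConjugate

noncomputable section

/-- The Fourier transform of a positive Borel measure on `ℝ`:
`μ̂(x) = ∫ e^{ixt} dμ(t)`. -/
def mFourier (μ : Measure ℝ) (x : ℝ) : ℂ :=
  ∫ t : ℝ, Complex.exp (Complex.I * x * t) ∂μ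

/-- The integral of a complex-valued function against a finite signed measure,
via the Jordan decomposition. -/
def sIntegral (σ : SignedMeasure ℝ) (f : ℝ → ℂ) : ℂ :=
  (∫ t : ℝ, f t ∂σ.toJordanDecomposition.posPart) -
    ∫ t : ℝ, f t ∂σ.toJordanDecomposition.negPart

/-- The Fourier transform of a finite signed measure on `ℝ`. -/
def sFourier (σ : SignedMeasure ℝ) (x : ℝ) : ℂ :=
  sIntegral σ fun t => Complex.exp (Complex.I * x * t)

/-- The topological support of a positive Borel measure on `ℝ`. -/
def msupport (μ : Measure ℝ) : Set ℝ :=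
  {x : ℝ | ∀ U : Set ℝ, IsOpen U → x ∈ U → 0 < μ U}

/-- A subset of `ℝ` is an open interval iff it is open and order-connected. -/
def IsOpenInterval (s : Set ℝ) : Prop := IsOpen s ∧ s.OrdConnected

/-- A set `U ⊆ ℝ` is long if it is the union of a disjoint family of open intervals `I n`
with `∑ (|I n| / (1 + dist(0, I n)))² = ∞`. -/
def IsLong (U : Set ℝ) : Prop :=
  ∃ I : ℕ → Set ℝ, (∀ n, IsOpenInterval (I n)) ∧
    Pairwise (Function.onFun Disjoint I) ∧ (⋃ n, I n) = U ∧
    ∑' n : ℕ, (EMetric.diam (I n) / (1 + EMetric.infEdist (0 : ℝ) (I n))) ^ 2 = ⊤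

/-- A finite positive measure `μ` is `a`-determinate if there is no finite positive
measure `ν ≠ μ` whose Fourier transform agrees with that of `μ` on `[-a, a]`. -/
def IsDeterminate (μ : Measure ℝ) (a : ℝ) : Prop :=
  ∀ ν : Measure ℝ, IsFiniteMeasure ν →
    (∀ x ∈ Set.Icc (-a) a, mFourier ν x = mFourier μ x) → ν = μ

/-- An entire function has exponential type at most `a`. -/
def ExpTypeLE (F : ℂ → ℂ) (a : ℝ) : Prop :=
  ∀ ε > (0 : ℝ), ∃ C : ℝ, ∀ z : ℂ,
    ‖F z‖ ≤ C * Real.exp ((a + ε) * ‖z‖)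

/-- The Cartwright class `C_a`: entire functions of exponential type at most `a` with
`∫ log⁺|F(t)|/(1+t²) dt < ∞` on the real line. -/
def Cartwright (a : ℝ) : Set (ℂ → ℂ) :=
  {F | Differentiable ℂ F ∧ ExpTypeLE F a ∧
    Integrable (fun t : ℝ => max (Real.log (‖F t‖)) 0 / (1 + t ^ 2))}

/-- The Paley–Wiener space `PW_a`: entire functions of exponential type at most `a`
whose restriction to `ℝ` is square integrable. -/
def PaleyWiener (a : ℝ) : Set (ℂ → ℂ) :=
  {F | Differentiable ℂ F ∧ ExpTypeLE F a ∧ MemLp (fun t : ℝ => F t) 2 volume}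

/-- A short partition of `ℝ`: a partition into consecutive intervals
`I n = (t n, t (n+1)]`, `n ∈ ℤ`, with `|I n| → ∞` as `n → ±∞`, which is a short
family of intervals. -/
structure ShortPartition where
  t : ℤ → ℝ
  strictMono : StrictMono t
  tendsto_atTop : Tendsto t atTop atTop
  tendsto_atBot : Tendsto t atBot atBot
  len_atTop : Tendsto (fun n : ℤ => t (n + 1) - t n) atTop atTop
  len_atBot : Tendsto (fun n : ℤ => t (n + 1) - t n) atBot atTop
  short : Summable (fun n : ℤ =>
    ((t (n + 1) - t n) / (1 + Metric.infDist 0 (Set.Ioc (t n) (t (n + 1))))) ^ 2)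

/-- The `n`-th interval of a short partition. -/
def ShortPartition.interval (P : ShortPartition) (n : ℤ) : Set ℝ :=
  Set.Ioc (P.t n) (P.t (n + 1))

/-- The length of the `n`-th interval of a short partition. -/
def ShortPartition.len (P : ShortPartition) (n : ℤ) : ℝ := P.t (n + 1) - P.t n

/-- The number of points of the sequence `lam` lying in the set `s`. -/
def seqCount (lam : ℤ → ℝ) (s : Set ℝ) : ℕ := Nat.card {k : ℤ | lam k ∈ s}

/-- The logarithmic energy `E_I(n_Λ) = ∬_{I×I} log|x-y| dn_Λ(x) dn_Λ(y)` of the counting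
measure of the sequence `lam` on the set `s` (off-diagonal part; recall `log 0 = 0`
in Lean). -/
def seqEnergy (lam : ℤ → ℝ) (s : Set ℝ) : ℝ :=
  ∑' p : {k : ℤ | lam k ∈ s} × {k : ℤ | lam k ∈ s},
    Real.log |lam (p.1 : ℤ) - lam (p.2 : ℤ)|

/-- A discrete bi-infinite increasing sequence of reals (no finite accumulation points). -/
def IsDiscreteSeq (lam : ℤ → ℝ) : Prop :=
  StrictMono lam ∧ Tendsto lam atTop atTop ∧ Tendsto lam atBot atBot

/-- `lam` is regular with density `d`: for some short partition,
`#(Λ ∩ I n) - d·|I n| = o(|I n|)` as `|n| → ∞`. -/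
def IsRegularSeq (lam : ℤ → ℝ) (d : ℝ) : Prop :=
  ∃ P : ShortPartition, Tendsto
    (fun n : ℤ => ((seqCount lam (P.interval n) : ℝ) - d * P.len n) / P.len n)
    cofinite (nhds 0)

/-- `lam` is a `d`-uniform sequence: a discrete increasing sequence, regular with
density `d`, satisfying the energy condition for some short partition. -/
def IsUniformSeq (lam : ℤ → ℝ) (d : ℝ) : Prop :=
  IsDiscreteSeq lam ∧ IsRegularSeq lam d ∧
  ∃ P : ShortPartition, Summable (fun n : ℤ =>
    ((seqCount lam (P.interval n) : ℝ) ^ 2 * max (Real.log (P.len n)) 0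
      - seqEnergy lam (P.interval n)) / (1 + Metric.infDist 0 (P.interval n) ^ 2))

/-- `M_a(A,B)` (spectral gap form): finite signed measures of total variation at most `1`
with spectral gap `[-a,a]`, positive part supported in `A` and negative part in `B`. -/
def GapMeasures (a : ℝ) (A B : Set ℝ) : Set (SignedMeasure ℝ) :=
  {σ | σ.totalVariation Set.univ ≤ 1 ∧ (∀ x ∈ Set.Icc (-a) a, sFourier σ x = 0) ∧
    msupport σ.toJordanDecomposition.posPart ⊆ A ∧
    msupport σ.toJordanDecomposition.negPart ⊆ B}

/-- `M_a(A,B)` (annihilator form): finite signed measures of total variation at most `1`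
annihilating the Paley–Wiener space `PW_a`, positive part supported in `A` and negative
part in `B`. -/
def MaPW (a : ℝ) (A B : Set ℝ) : Set (SignedMeasure ℝ) :=
  {σ | σ.totalVariation Set.univ ≤ 1 ∧
    (∀ F ∈ PaleyWiener a, sIntegral σ (fun t : ℝ => F t) = 0) ∧
    msupport σ.toJordanDecomposition.posPart ⊆ A ∧
    msupport σ.toJordanDecomposition.negPart ⊆ B}

/-- The set of values `|F(x)|` over `F ∈ ℰ` with `‖F‖_{L²(μ)} ≤ 1`; its supremum is the
majorant `m(x)`. -/
def majorantSet (E : Set (ℂ → ℂ)) (μ : Measure ℝ) (x : ℝ) : Set ℝ :=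
  {y : ℝ | ∃ F ∈ E, eLpNorm (fun t : ℝ => F t) 2 μ ≤ 1 ∧ y = ‖F x‖}

/-- The number of sign changes of a signed measure `σ` on `(0, r)`: the minimal degree of
a nonzero real polynomial `p` such that `p·dσ` is a nonnegative measure on `[0, r]`
(`∞` if there is no such polynomial). -/
def signChanges (σ : SignedMeasure ℝ) (r : ℝ) : ℝ≥0∞ :=
  sInf {x : ℝ≥0∞ | ∃ p : Polynomial ℝ, p ≠ 0 ∧ x = (p.natDegree : ℝ≥0∞) ∧
    ∀ S : Set ℝ, MeasurableSet S → S ⊆ Set.Icc 0 r →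
      0 ≤ (∫ t in S, p.eval t ∂σ.toJordanDecomposition.posPart) -
          ∫ t in S, p.eval t ∂σ.toJordanDecomposition.negPart}

/-- The counting function `n_Λ` of a sequence `lam`: `n_Λ(0) = 0`, constant on each
`(λ_n, λ_{n+1}]` and jumping up by one at each `λ_n`. -/
def countFun (lam : ℤ → ℝ) (t : ℝ) : ℝ :=
  (Nat.card {n : ℤ | lam n ∈ Set.Ico 0 t} : ℝ) -
    (Nat.card {n : ℤ | lam n ∈ Set.Ico t 0} : ℝ)


/-!
If `|g x - c x| ≥ ε x` at a large `x`, monotonicity of `g` keeps `|g - c·|` above `ε x / 2` on an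
interval of length comparable to `ε x` next to `x`. That interval has Poisson measure comparable
to `ε / x`, so `t · Π(|g - c·| > t)` is bounded below by a constant multiple of `ε²` at
`t = ε x / 2`, against the hypothesis. The limit at `-∞` follows by applying this to `x ↦ -g (-x)`,
as `Π` is symmetric.
-/

def poissonMeasure : Measure ℝ :=
  volume.withDensity fun x => ENNReal.ofReal (1 / (1 + x ^ 2))

theorem poissonMeasure_apply (s : Set ℝ) :
    poissonMeasure s = ∫⁻ x in s, ENNReal.ofReal (1 / (1 + x ^ 2)) :=
  withDensity_apply' _ s

theorem poissonMeasure_preimage_neg (s : Set ℝ) :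
    poissonMeasure (Neg.neg ⁻¹' s) = poissonMeasure s := by
  have := (Measure.measurePreserving_neg volume).setLIntegral_comp_preimage_emb
    (MeasurableEquiv.neg ℝ).measurableEmbedding (fun x => ENNReal.ofReal (1 / (1 + x ^ 2))) s
  simp only [neg_sq] at this
  rw [poissonMeasure_apply, poissonMeasure_apply, ← this]

theorem ofReal_div_le_poissonMeasure_Ioo {a b R : ℝ} (ha : -R ≤ a) (hb : b ≤ R) :
    ENNReal.ofReal ((b - a) / (1 + R ^ 2)) ≤ poissonMeasure (Ioo a b) := by
  have hdensity : ∀ y ∈ Ioo a b,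
      ENNReal.ofReal (1 / (1 + R ^ 2)) ≤ ENNReal.ofReal (1 / (1 + y ^ 2)) := by
    rintro y ⟨hay, hyb⟩
    gcongr ENNReal.ofReal (1 / (1 + ?_))
    exact sq_le_sq' (by linarith) (by linarith)
  calc ENNReal.ofReal ((b - a) / (1 + R ^ 2))
      = ∫⁻ _ in Ioo a b, ENNReal.ofReal (1 / (1 + R ^ 2)) := by
        rw [setLIntegral_const, Real.volume_Ioo, ← ENNReal.ofReal_mul (by positivity),
          one_div_mul_eq_div]
    _ ≤ poissonMeasure (Ioo a b) :=
        (poissonMeasure_apply _).symm ▸ setLIntegral_mono' measurableSet_Ioo hdensity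

def PoissonTailVanishes (f : ℝ → ℝ) : Prop :=
  Tendsto (fun t => ENNReal.ofReal t * poissonMeasure {x | t < |f x|}) atTop (𝓝 0)

theorem PoissonTailVanishes.neg_comp_neg {f : ℝ → ℝ} (hf : PoissonTailVanishes f) :
    PoissonTailVanishes fun x => -f (-x) := by
  have hpreimage (t : ℝ) : {x | t < |-f (-x)|} = Neg.neg ⁻¹' {x | t < |f x|} := by
    simp only [abs_neg, preimage_setOf_eq]
  simpa only [PoissonTailVanishes, hpreimage, poissonMeasure_preimage_neg] using hf

section Monotone

variable {g : ℝ → ℝ} {c : ℝ}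

/-- Monotonicity carries a deviation above the line `c x` to the right of `x`, and one below it to
the left. -/
theorem Monotone.exists_Ioo_subset_lt_abs_sub_mul (hg : Monotone g) {t r x : ℝ} (hr : 0 ≤ r)
    (hx : t + |c| * r < |g x - c * x|) :
    ∃ a ∈ Icc (x - r) x, Ioo a (a + r) ⊆ {y | t < |g y - c * y|} := by
  have hslope (y : ℝ) (hy : |y - x| ≤ r) : |c * (y - x)| ≤ |c| * r := by
    rw [abs_mul]
    exact mul_le_mul_of_nonneg_left hy (abs_nonneg c)
  rcases lt_abs.1 hx with habove | hbelow
  · refine ⟨x, ⟨by linarith, le_rfl⟩, fun y hy => ?_⟩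
    refine mem_setOf.2 (lt_abs.2 (Or.inl ?_))
    have := hslope y (abs_sub_le_iff.2 ⟨by linarith [hy.2], by linarith [hy.1]⟩)
    linarith [hg hy.1.le, le_abs_self (c * (y - x))]
  · refine ⟨x - r, ⟨le_rfl, by linarith⟩, fun y hy => ?_⟩
    refine mem_setOf.2 (lt_abs.2 (Or.inr ?_))
    have := hslope y (abs_sub_le_iff.2 ⟨by linarith [hy.2], by linarith [hy.1]⟩)
    linarith [hg (show y ≤ x by linarith [hy.2]), neg_abs_le (c * (y - x))]

/-- The interval of length `δ x` obtained from the deviation at `x` lies in `[-2x, 2x]`, where the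
Poisson density is at least `1 / (5 x²)`. -/
theorem Monotone.ofReal_le_mul_poissonMeasure_of_le_abs_sub_mul (hg : Monotone g) {ε δ x : ℝ}
    (hδ : 0 ≤ δ) (hδ1 : δ ≤ 1) (hcδ : |c| * δ < ε / 2) (hx1 : 1 ≤ x)
    (hx : ε * x ≤ |g x - c * x|) :
    ENNReal.ofReal (ε * δ / 10) ≤
      ENNReal.ofReal (ε / 2 * x) * poissonMeasure {y | ε / 2 * x < |g y - c * y|} := by
  have hε : 0 ≤ ε := by nlinarith [abs_nonneg c]
  have hdev : ε / 2 * x + |c| * (δ * x) < |g x - c * x| := by nlinarith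
  obtain ⟨a, ⟨hax, hxa⟩, hsub⟩ := hg.exists_Ioo_subset_lt_abs_sub_mul (by positivity) hdev
  calc ENNReal.ofReal (ε * δ / 10)
      ≤ ENNReal.ofReal (ε / 2 * x * (δ * x / (1 + (2 * x) ^ 2))) := by
        refine ENNReal.ofReal_le_ofReal ?_
        rw [mul_div_assoc', le_div_iff₀ (by positivity)]
        nlinarith [mul_nonneg (mul_nonneg hε hδ) (by nlinarith : (0 : ℝ) ≤ x ^ 2 - 1)]
    _ = ENNReal.ofReal (ε / 2 * x) * ENNReal.ofReal ((a + δ * x - a) / (1 + (2 * x) ^ 2)) := by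
        rw [ENNReal.ofReal_mul (by positivity), add_sub_cancel_left]
    _ ≤ ENNReal.ofReal (ε / 2 * x) * poissonMeasure {y | ε / 2 * x < |g y - c * y|} := by
        gcongr
        exact (ofReal_div_le_poissonMeasure_Ioo (by nlinarith) (by nlinarith)).trans
          (measure_mono hsub)

theorem Monotone.eventually_abs_sub_mul_lt (hg : Monotone g)
    (h : PoissonTailVanishes fun x => g x - c * x) {ε : ℝ} (hε : 0 < ε) :
    ∀ᶠ x in atTop, |g x - c * x| < ε * x := by
  set δ := ε / (2 * |c| + ε)
  have hcε : 0 < 2 * |c| + ε := by positivity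
  have hδ : 0 < δ := by positivity
  have hδ1 : δ ≤ 1 := (div_le_one hcε).2 (by linarith [abs_nonneg c])
  have hcδ : |c| * δ < ε / 2 := by
    rw [mul_div_assoc', div_lt_div_iff₀ hcε two_pos]
    nlinarith
  have hsmall := (tendsto_id.const_mul_atTop (by positivity : 0 < ε / 2)).eventually
    (h.eventually_lt_const (by positivity : (0 : ℝ≥0∞) < ENNReal.ofReal (ε * δ / 10)))
  filter_upwards [hsmall, eventually_ge_atTop 1] with x hsmall hx1
  by_contra! hx
  exact (hg.ofReal_le_mul_poissonMeasure_of_le_abs_sub_mul hδ.le hδ1 hcδ hx1 hx).not_gt hsmall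

theorem Monotone.tendsto_div_atTop_of_poissonTailVanishes (hg : Monotone g)
    (h : PoissonTailVanishes fun x => g x - c * x) :
    Tendsto (fun x => g x / x) atTop (𝓝 c) := by
  refine Metric.tendsto_nhds.2 fun ε hε => ?_
  filter_upwards [hg.eventually_abs_sub_mul_lt h hε, eventually_gt_atTop 0] with x hx hx0
  rwa [Real.dist_eq, div_sub' hx0.ne', abs_div, abs_of_pos hx0, div_lt_iff₀ hx0, mul_comm x c]

end Monotone

theorem ratio_tendsto_of_poisson_tail_general (g : ℝ → ℝ) (hg : Monotone g) (c : ℝ)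
    (h : Filter.Tendsto (fun t : ℝ => ENNReal.ofReal t *
        ∫⁻ x in {x : ℝ | t < |g x - c * x|}, ENNReal.ofReal (1 / (1 + x ^ 2)))
      Filter.atTop (nhds 0)) :
    Filter.Tendsto (fun x : ℝ => g x / x) Filter.atTop (nhds c) ∧
    Filter.Tendsto (fun x : ℝ => g x / x) Filter.atBot (nhds c) := by
  have hdev : PoissonTailVanishes fun x => g x - c * x := by
    simpa only [PoissonTailVanishes, poissonMeasure_apply] using h
  have hreflect : Monotone fun x => -g (-x) := fun a b hab => neg_le_neg (hg (neg_le_neg hab))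
  have hdev_reflect : PoissonTailVanishes fun x => -g (-x) - c * x := by
    convert hdev.neg_comp_neg using 5
    ring
  refine ⟨hg.tendsto_div_atTop_of_poissonTailVanishes hdev, ?_⟩
  simpa [Function.comp_def, neg_div_neg_eq] using
    (hreflect.tendsto_div_atTop_of_poissonTailVanishes hdev_reflect).comp tendsto_neg_atBot_atTop

/-- If `g : ℝ → ℝ` is nondecreasing, `c > 0`, and
`t · Π({x : |g(x) - cx| > t}) → 0` as `t → ∞` for the Poisson measure
`dΠ(x) = dx/(1+x²)`, then `g(x)/x → c` as `x → ±∞`. -/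
theorem ratio_tendsto_of_poisson_tail (g : ℝ → ℝ) (hg : Monotone g) (c : ℝ) (hc : 0 < c)
    (h : Filter.Tendsto (fun t : ℝ => ENNReal.ofReal t *
        ∫⁻ x in {x : ℝ | t < |g x - c * x|}, ENNReal.ofReal (1 / (1 + x ^ 2)))
      Filter.atTop (nhds 0)) :
    Filter.Tendsto (fun x : ℝ => g x / x) Filter.atTop (nhds c) ∧
    Filter.Tendsto (fun x : ℝ => g x / x) Filter.atBot (nhds c) :=
  ratio_tendsto_of_poisson_tail_general g hg c h

end
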